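/- arXiv:2002.12510 — 4 statements merged into one kernel-verified Lean document; each statement's English description precedes it below -/
import Mathlib

section
/- Let C = {c_1, …, c_m} with m ≥ 1, let d ∉ C be a further candidate, and let s = (s_1, …, s_{m+1}) be a scoring vector of length m+1 with s_{m+1} = 0. Then for every family of integers η_{i,j} (1 ≤ i ≤ m, 1 ≤ j ≤ m) there exist a natural number λ and a total profile Q on C ∪ {d} consisting of at most m + (m + m²)·Σ_{i=1}^m Σ_{j=1}^m |η_{i,j}| votes such that s(Q, c_i) = λ + Σ_{j=1}^m η_{i,j}·(s_j − s_{j+1}) for every 1 ≤ i ≤ m, and s(Q, d) < λ. -/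
/-- The score of candidate `c` in a profile (a list of votes) under scoring vector `s`.
A vote assigns each candidate a position in `Fin m` (position `0` being most preferred),
and the candidate at position `k` receives `s k` points. -/
def score {C : Type*} {m : ℕ} (s : Fin m → ℕ) (P : List (C ≃ Fin m)) (c : C) : ℕ :=
  (P.map fun T => s (T c)).sum

/-!
Rotating a vote through all `m + 1` positions gives every candidate the same score `∑ₖ sₖ`.
If, in the one rotation where `cᵢ` and `d` occupy positions `j + 1` and `j`, these two trade
places, then `cᵢ` gains `sⱼ - sⱼ₊₁` over the other `c`'s while `d` drops below the baseline;
doing this for every `i' ≠ i` instead makes `cᵢ` lose `sⱼ - sⱼ₊₁` relative to the others.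
Stacking `|η i j|` copies of the appropriate gadget realizes all prescribed offsets with `d` at
most at the common baseline. Finally the `m` cyclic shifts of `c₁ ≻ ⋯ ≻ cₘ ≻ d` give each `cᵢ`
the score `s₁ + ⋯ + sₘ` but `d` only `m·sₘ₊₁`, which is strictly smaller since `s₁ > sₘ₊₁`.
-/

open Finset

section Rotations

variable {C : Type*} {n : ℕ} (s : Fin n → ℕ)

lemma score_append (P P' : List (C ≃ Fin n)) (c : C) :
    score s (P ++ P') c = score s P c + score s P' c := by
  simp [score]

lemma score_map_finRange {k : ℕ} (f : Fin k → C ≃ Fin n) (c : C) :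
    score s ((List.finRange k).map f) c = ∑ i, s (f i c) := by
  simp [score, Fin.sum_univ_def, Function.comp_def]

variable [NeZero n]

def rotations (v : C ≃ Fin n) : List (C ≃ Fin n) :=
  (List.finRange n).map fun k => v.trans (Equiv.addRight k)

lemma score_rotations (v : C ≃ Fin n) (c : C) : score s (rotations v) c = ∑ k, s k := by
  rw [rotations, score_map_finRange]
  exact Equiv.sum_comp (Equiv.addLeft (v c)) s

def twistedRotations [DecidableEq C] (v : C ≃ Fin n) (a b : C) (t : Fin n) :
    List (C ≃ Fin n) :=
  (List.finRange n).map fun k =>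
    if k = t then (Equiv.swap a b).trans (v.trans (Equiv.addRight k))
    else v.trans (Equiv.addRight k)

lemma score_twistedRotations [DecidableEq C] (v : C ≃ Fin n) (a b : C) (t : Fin n) (c : C) :
    (score s (twistedRotations v a b t) c : ℤ) =
      ∑ k, (s k : ℤ) + s (v (Equiv.swap a b c) + t) - s (v c + t) := by
  have hterm : ∀ k, (s ((if k = t then (Equiv.swap a b).trans (v.trans (Equiv.addRight k))
      else v.trans (Equiv.addRight k)) c) : ℤ) =
        s (v c + k) + if k = t then (s (v (Equiv.swap a b c) + t) - s (v c + t) : ℤ) else 0 := by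
    intro k
    split_ifs with hk
    · subst hk; simp
    · simp
  have hrot : ∑ k, (s (v c + k) : ℤ) = ∑ k, (s k : ℤ) :=
    Equiv.sum_comp (Equiv.addLeft (v c)) (fun k => (s k : ℤ))
  rw [twistedRotations, score_map_finRange, Nat.cast_sum, sum_congr rfl fun k _ => hterm k,
    sum_add_distrib, sum_ite_eq', if_pos (mem_univ t), hrot]
  ring

end Rotations

section LiftVote

variable {α : Type*} {n : ℕ} (s : Fin (n + 1) → ℕ)

def liftVote (v : α ≃ Fin n) : Option α ≃ Fin (n + 1) :=
  (Equiv.optionCongr v).trans finSuccEquivLast.symm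

@[simp] lemma liftVote_some (v : α ≃ Fin n) (x : α) : liftVote v (some x) = (v x).castSucc :=
  finSuccEquivLast_symm_some _

@[simp] lemma liftVote_none (v : α ≃ Fin n) : liftVote v none = Fin.last n :=
  finSuccEquivLast_symm_none

lemma score_map_liftVote_some (P : List (α ≃ Fin n)) (x : α) :
    score s (P.map liftVote) (some x) = score (s ∘ Fin.castSucc) P x := by
  simp [score, Function.comp_def]

lemma score_map_liftVote_none (P : List (α ≃ Fin n)) :
    score s (P.map liftVote) none = P.length * s (Fin.last n) := by
  simp [score, Function.comp_def]

end LiftVote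

section Realizes

variable {α ι : Type*} {n : ℕ} (s : Fin n → ℕ)

def Realizes (P : List (Option α ≃ Fin n)) (β : ℤ) (f : α → ℤ) : Prop :=
  (∀ x, (score s P (some x) : ℤ) = β + f x) ∧ (score s P none : ℤ) ≤ β

variable {s}

lemma realizes_nil : Realizes s ([] : List (Option α ≃ Fin n)) 0 0 :=
  ⟨fun _ => by simp [score], by simp [score]⟩

lemma Realizes.nonneg {P : List (Option α ≃ Fin n)} {β : ℤ} {f : α → ℤ}
    (h : Realizes s P β f) : 0 ≤ β :=
  (Int.natCast_nonneg _).trans h.2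

lemma Realizes.append {P P' : List (Option α ≃ Fin n)} {β β' : ℤ} {f f' : α → ℤ}
    (h : Realizes s P β f) (h' : Realizes s P' β' f') : Realizes s (P ++ P') (β + β') (f + f') := by
  refine ⟨fun x => ?_, ?_⟩
  · rw [score_append, Nat.cast_add, h.1, h'.1, Pi.add_apply]; ring
  · rw [score_append, Nat.cast_add]; exact add_le_add h.2 h'.2

lemma Realizes.add_const {P : List (Option α ≃ Fin n)} {β c : ℤ} {f : α → ℤ}
    (h : Realizes s P β f) (hc : 0 ≤ c) : Realizes s P (β + c) (fun x => f x - c) :=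
  ⟨fun x => by rw [h.1]; ring, by linarith [h.2]⟩

lemma Realizes.replicate_flatten {P : List (Option α ≃ Fin n)} {β : ℤ} {f : α → ℤ}
    (h : Realizes s P β f) (r : ℕ) :
    Realizes s (List.replicate r P).flatten (r * β) ((r : ℤ) • f) := by
  induction r with
  | zero => simpa using realizes_nil
  | succ r ih =>
    simpa [List.replicate_succ, add_mul, add_smul, add_comm] using h.append ih

lemma Realizes.flatMap {l : List ι} {F : ι → List (Option α ≃ Fin n)} {β : ι → ℤ}
    {f : ι → α → ℤ} (h : ∀ k ∈ l, Realizes s (F k) (β k) (f k)) :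
    Realizes s (l.flatMap F) (l.map β).sum (l.map f).sum := by
  induction l with
  | nil => simpa using realizes_nil
  | cons k l ih =>
    simpa using (h k (by simp)).append (ih fun k' hk' => h k' (by simp [hk']))

lemma Realizes.flatMap_toList {S : Finset ι} {F : ι → List (Option α ≃ Fin n)} {β : ι → ℤ}
    {f : ι → α → ℤ} (h : ∀ k ∈ S, Realizes s (F k) (β k) (f k)) :
    Realizes s (S.toList.flatMap F) (∑ k ∈ S, β k) (∑ k ∈ S, f k) := by
  simpa using Realizes.flatMap (l := S.toList) (fun k hk => h k (by simpa using hk))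

end Realizes

lemma Fin.last_add_succ {m : ℕ} (j : Fin m) : Fin.last m + j.succ = j.castSucc := by
  rw [← Fin.coeSucc_eq_succ, add_left_comm, Fin.last_add_one, add_zero]

section Gadgets

variable {m : ℕ} [NeZero m] (s : Fin (m + 1) → ℕ)

/-- Rotations of a vote ranking `some i` first and `none` last; in the rotation that puts them
at positions `j + 1` and `j`, they trade places. -/
def gadget (i j : Fin m) : List (Option (Fin m) ≃ Fin (m + 1)) :=
  twistedRotations (liftVote (Equiv.swap i 0)) (some i) none j.succ

lemma realizes_gadget (hs : Antitone s) (i j : Fin m) :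
    Realizes s (gadget i j) (∑ k, s k) (Pi.single i ((s j.castSucc : ℤ) - s j.succ)) := by
  have hj : s j.succ ≤ s j.castSucc := hs (Fin.castSucc_le_succ j)
  refine ⟨fun x => ?_, ?_⟩
  · rw [gadget, score_twistedRotations]
    obtain rfl | hx := eq_or_ne x i
    · simp only [Equiv.swap_apply_left, liftVote_none, Fin.last_add_succ, liftVote_some,
        Fin.castSucc_zero, zero_add, Pi.single_eq_same]
      ring
    · simp [Equiv.swap_apply_of_ne_of_ne, hx]
  · rw [gadget, score_twistedRotations]
    simp only [Equiv.swap_apply_right, liftVote_some, Equiv.swap_apply_left, Fin.castSucc_zero,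
      zero_add, liftVote_none, Fin.last_add_succ]
    omega

noncomputable def coGadget (i j : Fin m) : List (Option (Fin m) ≃ Fin (m + 1)) :=
  (univ.erase i).toList.flatMap fun i' => gadget i' j

lemma realizes_coGadget (hs : Antitone s) (i j : Fin m) :
    Realizes s (coGadget i j) ((m - 1) * ∑ k, (s k : ℤ) + ((s j.castSucc : ℤ) - s j.succ))
      (-Pi.single i ((s j.castSucc : ℤ) - s j.succ)) := by
  have hj : s j.succ ≤ s j.castSucc := hs (Fin.castSucc_le_succ j)
  have h := (Realizes.flatMap_toList (S := univ.erase i) fun i' _ =>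
    realizes_gadget s hs i' j).add_const (c := (s j.castSucc : ℤ) - s j.succ) (by omega)
  have hβ : ∑ _i' ∈ univ.erase i, ∑ k, (s k : ℤ) = (m - 1) * ∑ k, (s k : ℤ) := by
    simp [card_erase_of_mem, Nat.cast_sub NeZero.one_le]
  have hf : (fun x => (∑ i' ∈ univ.erase i, Pi.single i' ((s j.castSucc : ℤ) - s j.succ)) x -
      ((s j.castSucc : ℤ) - s j.succ)) = -Pi.single i ((s j.castSucc : ℤ) - s j.succ) := by
    ext x
    simp only [Finset.sum_apply, Pi.single_apply, sum_ite_eq, mem_erase, ne_eq, ite_not,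
      mem_univ, and_true, Pi.neg_apply]
    split_ifs <;> ring
  rwa [hβ, hf] at h

noncomputable def signedGadget (e : ℤ) (i j : Fin m) : List (Option (Fin m) ≃ Fin (m + 1)) :=
  (List.replicate e.natAbs (if 0 ≤ e then gadget i j else coGadget i j)).flatten

lemma exists_realizes_signedGadget (hs : Antitone s) (e : ℤ) (i j : Fin m) :
    ∃ β, Realizes s (signedGadget e i j) β (Pi.single i (e * ((s j.castSucc : ℤ) - s j.succ))) := by
  rw [signedGadget]
  split_ifs with he
  · have h := (realizes_gadget s hs i j).replicate_flatten e.natAbs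
    rw [Int.natAbs_of_nonneg he, ← Pi.single_smul'] at h
    exact ⟨_, h⟩
  · have h := (realizes_coGadget s hs i j).replicate_flatten e.natAbs
    rw [Int.ofNat_natAbs_of_nonpos (by omega), smul_neg, neg_smul, neg_neg,
      ← Pi.single_smul'] at h
    exact ⟨_, h⟩

lemma length_gadget (i j : Fin m) : (gadget i j).length = m + 1 := by
  simp [gadget, twistedRotations]

lemma length_coGadget (i j : Fin m) : (coGadget i j).length = (m - 1) * (m + 1) := by
  simp [coGadget, List.length_flatMap, length_gadget, card_erase_of_mem]

lemma length_signedGadget_le (e : ℤ) (i j : Fin m) :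
    (signedGadget e i j).length ≤ e.natAbs * (m + m ^ 2) := by
  have hm : 1 ≤ m := NeZero.one_le
  simp only [signedGadget, List.length_flatten, List.map_replicate, List.sum_replicate, smul_eq_mul]
  gcongr
  split_ifs
  · rw [length_gadget]
    nlinarith
  · rw [length_coGadget]
    calc (m - 1) * (m + 1) ≤ m * (m + 1) := Nat.mul_le_mul_right _ (Nat.sub_le m 1)
      _ = m + m ^ 2 := by ring

end Gadgets

def baseProfile (m : ℕ) [NeZero m] : List (Option (Fin m) ≃ Fin (m + 1)) :=
  (rotations (Equiv.refl (Fin m))).map liftVote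

section Profiles

variable {m : ℕ} [NeZero m] (s : Fin (m + 1) → ℕ)

noncomputable def gadgetProfile (η : Fin m → Fin m → ℤ) : List (Option (Fin m) ≃ Fin (m + 1)) :=
  (univ : Finset (Fin m × Fin m)).toList.flatMap fun p => signedGadget (η p.1 p.2) p.1 p.2

lemma exists_realizes_gadgetProfile (hs : Antitone s) (η : Fin m → Fin m → ℤ) :
    ∃ β, Realizes s (gadgetProfile η) β
      (fun i => ∑ j, η i j * ((s j.castSucc : ℤ) - s j.succ)) := by
  choose β hβ using fun p : Fin m × Fin m =>
    exists_realizes_signedGadget s hs (η p.1 p.2) p.1 p.2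
  have h := Realizes.flatMap_toList (S := univ) fun p _ => hβ p
  have hf : ∑ p : Fin m × Fin m, Pi.single p.1 (η p.1 p.2 * ((s p.2.castSucc : ℤ) - s p.2.succ)) =
      fun i => ∑ j, η i j * ((s j.castSucc : ℤ) - s j.succ) := by
    ext i
    simp [Finset.sum_apply, Fintype.sum_prod_type, Pi.single_apply]
  rw [hf] at h
  exact ⟨_, h⟩

lemma length_gadgetProfile_le (η : Fin m → Fin m → ℤ) :
    (gadgetProfile η).length ≤ (m + m ^ 2) * ∑ i, ∑ j, (η i j).natAbs := by
  rw [gadgetProfile, List.length_flatMap, sum_map_toList]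
  refine (sum_le_sum fun p _ => length_signedGadget_le (η p.1 p.2) p.1 p.2).trans_eq ?_
  simp_rw [Fintype.sum_prod_type, mul_sum, mul_comm]

lemma length_baseProfile : (baseProfile m).length = m := by
  simp [baseProfile, rotations]

lemma score_baseProfile_some (x : Fin m) :
    score s (baseProfile m) (some x) = ∑ k : Fin m, s k.castSucc := by
  rw [baseProfile, score_map_liftVote_some, score_rotations, Function.comp_def]

lemma score_baseProfile_none_lt (hs : Antitone s) (hs0 : s (Fin.last m) < s 0) :
    score s (baseProfile m) none < ∑ k : Fin m, s k.castSucc := by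
  rw [baseProfile, score_map_liftVote_none, rotations, List.length_map, List.length_finRange]
  calc m * s (Fin.last m) = ∑ _k : Fin m, s (Fin.last m) := by simp
    _ < ∑ k : Fin m, s k.castSucc :=
      sum_lt_sum (fun k _ => hs (Fin.le_last _)) ⟨0, mem_univ _, by simpa using hs0⟩

end Profiles

theorem stmt0_general (m : ℕ) (hm : 1 ≤ m)
    (s : Fin (m + 1) → ℕ) (hanti : Antitone s)
    (hnt : s (Fin.last m) < s 0)
    (η : Fin m → Fin m → ℤ) :
    ∃ (lam : ℕ) (Q : List (Option (Fin m) ≃ Fin (m + 1))),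
      Q.length ≤ m + (m + m ^ 2) * ∑ i : Fin m, ∑ j : Fin m, (η i j).natAbs ∧
      (∀ i : Fin m, (score s Q (some i) : ℤ) =
        (lam : ℤ) + ∑ j : Fin m, η i j * ((s j.castSucc : ℤ) - (s j.succ : ℤ))) ∧
      score s Q none < lam := by
  have : NeZero m := ⟨by omega⟩
  obtain ⟨β, hG⟩ := exists_realizes_gadgetProfile s hanti η
  have hβ : ((β.toNat : ℕ) : ℤ) = β := Int.toNat_of_nonneg hG.nonneg
  refine ⟨∑ k : Fin m, s k.castSucc + β.toNat, baseProfile m ++ gadgetProfile η, ?_,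
    fun i => ?_, ?_⟩
  · rw [List.length_append, length_baseProfile]
    exact Nat.add_le_add_left (length_gadgetProfile_le η) m
  · rw [score_append, Nat.cast_add, hG.1, score_baseProfile_some, Nat.cast_add, hβ, add_assoc]
  · have hbase := score_baseProfile_none_lt s hanti hnt
    have hgadget := hG.2
    rw [score_append]
    omega

/-- for every scoring vector `s` of length `m+1` with last value `0` and every
family of integers `η i j`, there are a natural number `λ` and a total profile `Q` on
`C ∪ {d}` (modelled as `Option (Fin m)`, with `none` playing the role of `d`) of at most
`m + (m + m²)·Σ|η i j|` votes such that `s(Q, cᵢ) = λ + Σⱼ η i j (sⱼ − sⱼ₊₁)` for every `i`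
and `s(Q, d) < λ`. -/
theorem stmt0 (m : ℕ) (hm : 1 ≤ m)
    (s : Fin (m + 1) → ℕ) (hanti : Antitone s)
    (hnt : s (Fin.last m) < s 0) (hlast : s (Fin.last m) = 0)
    (η : Fin m → Fin m → ℤ) :
    ∃ (lam : ℕ) (Q : List (Option (Fin m) ≃ Fin (m + 1))),
      Q.length ≤ m + (m + m ^ 2) * ∑ i : Fin m, ∑ j : Fin m, (η i j).natAbs ∧
      (∀ i : Fin m, (score s Q (some i) : ℤ) =
        (lam : ℤ) + ∑ j : Fin m, η i j * ((s j.castSucc : ℤ) - (s j.succ : ℤ))) ∧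
      score s Q none < lam :=
  stmt0_general m hm s hanti hnt η
end

section
/- With P, P', Q and the 2-approval scoring vector as in the construction from the 3DM instance (described in the context), the distinguished candidate c is a possible winner of the partial profile P ∪ Q under 2-approval if and only if the 3DM instance is positive. -/
/-- The `k`-approval scoring vector of length `m`: the top `k` positions get one point. -/
def kApproval (m k : ℕ) : Fin m → ℕ := fun pos => if (pos : ℕ) < k then 1 else 0

/-- Candidates of Reduction 1: the element candidates of `X`, `Y`, `Z` (each of size `q`)
together with the distinguished candidate `c` and the fresh candidates `d₁` and `w`. -/
inductive Cand1 (q : ℕ) where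
  | x (i : Fin q)
  | y (i : Fin q)
  | z (i : Fin q)
  | c
  | d1
  | w

/-!
In a completion of `P`, vote `i` still ranks `x_{i₁} ≻ y_{i₂}` above every candidate outside
`{x_{i₁}, y_{i₂}, z_{i₃}, d₁}`, so its two points go to members of that set, `x_{i₁}` getting at
least as many as `y_{i₂}`, and `c` scores `λ`. For `c` to win, every `x` and every `y` must lose a
point in some vote, while each `z` can gain at most one point and `d₁` at most `q`. Let `A`
(resp. `B`) be the votes in which `x_{i₁}` (resp. `y_{i₂}`) scores nothing. Then `A ⊆ B`, both
have at least `q` elements, and counting the `2t` points gives `|A| + |B| ≤ 2q`. So `A = B` has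
exactly `q` votes and meets every `x` and every `y` exactly once. Each vote of `A` gives
`z_{i₃}` a point, so `A` also meets every `z` at most once: it is an exact cover.

Conversely, given an exact cover `K`, exchanging `x_{i₁}, y_{i₂}` with `z_{i₃}, d₁` in the votes
of `K` takes one point from each `x` and each `y`, gives one to each `z` and `q` to `d₁`. Every
candidate except `w` then scores exactly `λ`.
-/

deriving instance DecidableEq, Fintype for Cand1

open Finset

theorem kApproval_le_one (m k : ℕ) (p : Fin m) : kApproval m k p ≤ 1 := by
  unfold kApproval; split <;> omega

theorem kApproval_antitone (m k : ℕ) : Antitone (kApproval m k) := by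
  intro p p' h
  rw [Fin.le_def] at h
  simp only [kApproval]
  split_ifs <;> omega

theorem score_ofFn_append {C : Type*} {m t : ℕ} (s : Fin m → ℕ) (T : Fin t → (C ≃ Fin m))
    (Q : List (C ≃ Fin m)) (u : C) :
    score s (List.ofFn T ++ Q) u = ∑ i, s (T i u) + score s Q u := by
  simp [score, List.map_ofFn, List.sum_ofFn, Function.comp_def]

section TwoApproval

variable {α : Type*} {m : ℕ}

theorem sum_kApproval_two [Fintype α] (e : α ≃ Fin m) (hm : 2 ≤ m) :
    ∑ u, kApproval m 2 (e u) = 2 := by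
  rw [e.sum_comp (kApproval m 2)]
  simp only [kApproval]
  have : {j ∈ range m | j < 2} = range 2 := by ext; simp only [mem_filter, mem_range]; omega
  rw [Fin.sum_univ_eq_sum_range (fun j => if j < 2 then 1 else 0), sum_boole, this]
  simp

theorem kApproval_two_eq_zero_of_lt (e : α ≃ Fin m) {a b u : α} (hab : a ≠ b)
    (ha : e a < e u) (hb : e b < e u) : kApproval m 2 (e u) = 0 := by
  have := Fin.val_injective.ne (e.injective.ne hab)
  rw [Fin.lt_def] at ha hb
  exact if_neg (by omega)

end TwoApproval

section TopFour

variable {α : Type*} {m : ℕ}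

def IsTopFour (e : α ≃ Fin m) (a b c d : α) : Prop :=
  (e a).val = 0 ∧ (e b).val = 1 ∧ (e c).val = 2 ∧ (e d).val = 3

def swapPairs [DecidableEq α] (e : α ≃ Fin m) (a b c d : α) : α ≃ Fin m :=
  (Equiv.swap a c * Equiv.swap b d).trans e

variable {e : α ≃ Fin m} {a b c d : α}

theorem IsTopFour.kApproval_two_eq [DecidableEq α] (h : IsTopFour e a b c d) (u : α) :
    kApproval m 2 (e u) = if u = a ∨ u = b then 1 else 0 := by
  obtain ⟨ha, hb, -, -⟩ := h
  have hua : u = a ↔ (e u).val = 0 := by rw [← ha, Fin.val_inj, e.apply_eq_iff_eq]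
  have hub : u = b ↔ (e u).val = 1 := by rw [← hb, Fin.val_inj, e.apply_eq_iff_eq]
  simp only [kApproval, hua, hub]
  split_ifs <;> omega

theorem IsTopFour.four_le_val (h : IsTopFour e a b c d) {u : α} (hua : u ≠ a) (hub : u ≠ b)
    (huc : u ≠ c) (hud : u ≠ d) : 4 ≤ (e u).val := by
  have hne : ∀ {w : α}, u ≠ w → (e u).val ≠ (e w).val :=
    fun huw => Fin.val_injective.ne (e.injective.ne huw)
  have := hne hua; have := hne hub; have := hne huc; have := hne hud
  obtain ⟨ha, hb, hc, hd⟩ := h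
  omega

variable [DecidableEq α]

theorem isTopFour_swapPairs (h : IsTopFour e a b c d) :
    IsTopFour (swapPairs e a b c d) c d a b := by
  obtain ⟨ha, hb, hc, hd⟩ := h
  have hab : a ≠ b := by rintro rfl; omega
  have had : a ≠ d := by rintro rfl; omega
  have hbc : b ≠ c := by rintro rfl; omega
  have hcd : c ≠ d := by rintro rfl; omega
  simp only [IsTopFour, swapPairs, Equiv.trans_apply, Equiv.Perm.mul_apply,
    Equiv.swap_apply_left, Equiv.swap_apply_right, Equiv.swap_apply_of_ne_of_ne hbc.symm hcd,
    Equiv.swap_apply_of_ne_of_ne hab.symm hbc, Equiv.swap_apply_of_ne_of_ne hab had,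
    Equiv.swap_apply_of_ne_of_ne had.symm hcd.symm]
  exact ⟨ha, hb, hc, hd⟩

theorem IsTopFour.swapPairs_val (h : IsTopFour e a b c d) {u : α} (huc : u ≠ c) (hud : u ≠ d) :
    (swapPairs e a b c d u).val = if (e u).val < 2 then (e u).val + 2 else (e u).val := by
  have hs := isTopFour_swapPairs h
  by_cases hua : u = a
  · subst hua; rw [hs.2.2.1, h.1]; rfl
  by_cases hub : u = b
  · subst hub; rw [hs.2.2.2, h.2.1]; rfl
  have h4 := h.four_le_val hua hub huc hud
  have h4' := hs.four_le_val huc hud hua hub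
  simp only [swapPairs, Equiv.trans_apply, Equiv.Perm.mul_apply,
    Equiv.swap_apply_of_ne_of_ne hub hud, Equiv.swap_apply_of_ne_of_ne hua huc]
  split_ifs <;> omega

theorem IsTopFour.swapPairs_lt_swapPairs (h : IsTopFour e a b c d) {u v : α}
    (huc : u ≠ c) (hud : u ≠ d) (hvc : v ≠ c) (hvd : v ≠ d) (huv : e u < e v) :
    swapPairs e a b c d u < swapPairs e a b c d v := by
  have hne : ∀ {w x : α}, w ≠ x → (e w).val ≠ (e x).val :=
    fun hwx => Fin.val_injective.ne (e.injective.ne hwx)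
  have := hne huc; have := hne hud; have := hne hvc; have := hne hvd
  rw [Fin.lt_def] at huv ⊢
  rw [h.swapPairs_val huc hud, h.swapPairs_val hvc hvd]
  obtain ⟨-, -, hc, hd⟩ := h
  split_ifs <;> omega

end TopFour

section ExactCover

variable {ι : Type*} {q : ℕ}

def IsExactCover (S : ι → Fin q × Fin q × Fin q) (K : Finset ι) : Prop :=
  #K = q ∧ ∀ i ∈ K, ∀ j ∈ K, i ≠ j →
    (S i).1 ≠ (S j).1 ∧ (S i).2.1 ≠ (S j).2.1 ∧ (S i).2.2 ≠ (S j).2.2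

theorem le_card_of_forall_exists {K : Finset ι} {f : ι → Fin q}
    (hf : ∀ x, ∃ i ∈ K, f i = x) : q ≤ #K := by
  simpa using card_le_card_of_surjOn f (t := univ) fun x _ => by simpa using hf x

theorem injOn_of_forall_exists {K : Finset ι} {f : ι → Fin q} (hK : #K ≤ q)
    (hf : ∀ x, ∃ i ∈ K, f i = x) : Set.InjOn f K :=
  injOn_of_surjOn_of_card_le f (t := univ) (fun _ _ => by simp) (fun x _ => by simpa using hf x)
    (by simpa using hK)

theorem card_filter_eq_one_of_injOn [DecidableEq ι] {K : Finset ι} {f : ι → Fin q}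
    (hK : #K = q) (hf : Set.InjOn f K) (x : Fin q) : #{i ∈ K | x = f i} = 1 := by
  obtain ⟨i, hi, rfl⟩ := surjOn_of_injOn_of_card_le f (t := univ) (fun _ _ => by simp) hf
    (by simp [hK]) (mem_univ x)
  refine card_eq_one.2 ⟨i, ext fun j => ⟨fun hj => ?_, fun hj => ?_⟩⟩
  · rw [mem_filter] at hj
    exact mem_singleton.2 (hf hj.1 hi hj.2.symm)
  · rw [mem_singleton.1 hj]
    exact mem_filter.2 ⟨hi, rfl⟩

theorem sum_add_card_filter_eq_zero [Fintype ι] {f : ι → ℕ} (hf : ∀ i, f i ≤ 1) :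
    ∑ i, f i + #{i | f i = 0} = Fintype.card ι := by
  rw [card_filter, ← sum_add_distrib, ← card_univ, card_eq_sum_ones]
  exact sum_congr rfl fun i _ => by have := hf i; split_ifs <;> omega

/-- `a i, b i, c i, d i` are the points that vote `i` of a winning completion gives to
`x_{i₁}, y_{i₂}, z_{i₃}, d₁`. -/
theorem exists_isExactCover_of_points [Fintype ι] [DecidableEq ι]
    (S : ι → Fin q × Fin q × Fin q) {a b c d : ι → ℕ}
    (ha : ∀ i, a i ≤ 1) (hb : ∀ i, b i ≤ 1) (hd : ∀ i, d i ≤ 1)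
    (hba : ∀ i, b i ≤ a i) (hsum : ∀ i, a i + b i + c i + d i = 2)
    (hX : ∀ x, ∃ i, (S i).1 = x ∧ a i = 0) (hY : ∀ y, ∃ i, (S i).2.1 = y ∧ b i = 0)
    (hZ : ∀ z, ∑ i with (S i).2.2 = z, c i ≤ 1) (hD : ∑ i, d i ≤ q) :
    ∃ K, IsExactCover S K := by
  set A : Finset ι := {i | a i = 0}
  set B : Finset ι := {i | b i = 0}
  have hXA : ∀ x, ∃ i ∈ A, (S i).1 = x := fun x => by
    obtain ⟨i, hi, h0⟩ := hX x
    exact ⟨i, mem_filter.2 ⟨mem_univ i, h0⟩, hi⟩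
  have hYB : ∀ y, ∃ i ∈ B, (S i).2.1 = y := fun y => by
    obtain ⟨i, hi, h0⟩ := hY y
    exact ⟨i, mem_filter.2 ⟨mem_univ i, h0⟩, hi⟩
  have hC : ∑ i, c i ≤ q := by
    rw [← sum_fiberwise univ (fun i => (S i).2.2) c]
    simpa using sum_le_card_nsmul univ _ 1 fun z _ => hZ z
  -- each vote hands out two points, and the `z`'s and `d₁` absorb at most `2 q` of them
  have hAB : #A + #B ≤ 2 * q := by
    have hsum' : ∑ i, (a i + b i + c i + d i) = ∑ _i : ι, 2 := sum_congr rfl fun i _ => hsum i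
    simp only [sum_add_distrib, sum_const, card_univ, smul_eq_mul] at hsum'
    have hA : ∑ i, a i + #A = Fintype.card ι := sum_add_card_filter_eq_zero ha
    have hB : ∑ i, b i + #B = Fintype.card ι := sum_add_card_filter_eq_zero hb
    omega
  have hqA := le_card_of_forall_exists hXA
  have hqB := le_card_of_forall_exists hYB
  have hAeqB : A = B := eq_of_subset_of_card_le
    (fun i hi => mem_filter.2
      ⟨mem_univ i, by have := hba i; have := (mem_filter.1 hi).2; omega⟩)
    (by omega)
  have hc : ∀ i ∈ A, 1 ≤ c i := fun i hi => by
    have := (mem_filter.1 hi).2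
    have := (mem_filter.1 (hAeqB ▸ hi : i ∈ B)).2
    have := hsum i; have := hd i
    omega
  refine ⟨A, by omega, fun i hi j hj hij => ⟨fun h => hij ?_, fun h => hij ?_, fun h => ?_⟩⟩
  · exact injOn_of_forall_exists (by omega) hXA hi hj h
  · rw [hAeqB] at hi hj
    exact injOn_of_forall_exists (by omega) hYB hi hj h
  · have := add_le_sum (f := c) (s := {k | (S k).2.2 = (S i).2.2}) (fun _ _ => Nat.zero_le _)
      (by simp) (by simp [h]) hij
    have := hZ (S i).2.2; have := hc i hi; have := hc j hj
    omega

namespace IsExactCover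

variable {S : ι → Fin q × Fin q × Fin q} {K : Finset ι}

theorem injOn_fst (hK : IsExactCover S K) : Set.InjOn (fun i => (S i).1) K :=
  fun i hi j hj h => by_contra fun hij => (hK.2 i hi j hj hij).1 h

theorem injOn_snd (hK : IsExactCover S K) : Set.InjOn (fun i => (S i).2.1) K :=
  fun i hi j hj h => by_contra fun hij => (hK.2 i hi j hj hij).2.1 h

theorem injOn_thd (hK : IsExactCover S K) : Set.InjOn (fun i => (S i).2.2) K :=
  fun i hi j hj h => by_contra fun hij => (hK.2 i hi j hj hij).2.2 h

end IsExactCover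

end ExactCover

section Reduction

variable {q t m : ℕ}

/-- `T` completes the partial profile `P`, whose vote `pᵢ` is `p'ᵢ` with `z_{i₃}` and `d₁`
deleted. -/
def IsCompletion (S : Fin t → Fin q × Fin q × Fin q) (p' T : Fin t → (Cand1 q ≃ Fin m)) :
    Prop :=
  ∀ (i : Fin t) (u v : Cand1 q), u ≠ Cand1.z (S i).2.2 → u ≠ Cand1.d1 →
    v ≠ Cand1.z (S i).2.2 → v ≠ Cand1.d1 → p' i u < p' i v → T i u < T i v

def RanksTriplesOnTop (S : Fin t → Fin q × Fin q × Fin q) (p' : Fin t → (Cand1 q ≃ Fin m)) :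
    Prop :=
  ∀ i, IsTopFour (p' i) (Cand1.x (S i).1) (Cand1.y (S i).2.1) (Cand1.z (S i).2.2) Cand1.d1

variable {S : Fin t → Fin q × Fin q × Fin q} {p' T : Fin t → (Cand1 q ≃ Fin m)}

theorem RanksTriplesOnTop.score_eq (hp' : RanksTriplesOnTop S p') (Q : List (Cand1 q ≃ Fin m))
    (u : Cand1 q) : score (kApproval m 2) (List.ofFn p' ++ Q) u =
      ∑ i, (if u = Cand1.x (S i).1 ∨ u = Cand1.y (S i).2.1 then 1 else 0) +
        score (kApproval m 2) Q u := by
  simp only [score_ofFn_append, (hp' _).kApproval_two_eq]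

namespace IsCompletion

theorem kApproval_eq_zero (hT : IsCompletion S p' T) (hp' : RanksTriplesOnTop S p')
    {i : Fin t} {u : Cand1 q} (hux : u ≠ Cand1.x (S i).1) (huy : u ≠ Cand1.y (S i).2.1)
    (huz : u ≠ Cand1.z (S i).2.2) (hud : u ≠ Cand1.d1) : kApproval m 2 (T i u) = 0 := by
  have h4 := (hp' i).four_le_val hux huy huz hud
  refine kApproval_two_eq_zero_of_lt (T i) (a := Cand1.x (S i).1) (b := Cand1.y (S i).2.1) nofun
    (hT i _ _ nofun nofun huz hud ?_) (hT i _ _ nofun nofun huz hud ?_)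
  · rw [Fin.lt_def, (hp' i).1]; omega
  · rw [Fin.lt_def, (hp' i).2.1]; omega

theorem kApproval_y_le_x (hT : IsCompletion S p' T) (hp' : RanksTriplesOnTop S p') (i : Fin t) :
    kApproval m 2 (T i (Cand1.y (S i).2.1)) ≤ kApproval m 2 (T i (Cand1.x (S i).1)) :=
  kApproval_antitone m 2 (hT i (Cand1.x (S i).1) (Cand1.y (S i).2.1) nofun nofun nofun nofun
    (by rw [Fin.lt_def, (hp' i).1, (hp' i).2.1]; omega)).le

theorem kApproval_add_four (hT : IsCompletion S p' T) (hp' : RanksTriplesOnTop S p')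
    (i : Fin t) :
    kApproval m 2 (T i (Cand1.x (S i).1)) + kApproval m 2 (T i (Cand1.y (S i).2.1)) +
      kApproval m 2 (T i (Cand1.z (S i).2.2)) + kApproval m 2 (T i Cand1.d1) = 2 := by
  have hm : 2 ≤ m := by have := (p' i Cand1.d1).isLt; have := (hp' i).2.2.2; omega
  have hsum := sum_kApproval_two (T i) hm
  rw [← sum_subset (subset_univ
      {Cand1.x (S i).1, Cand1.y (S i).2.1, Cand1.z (S i).2.2, Cand1.d1})
    fun u _ hu => by
      simp only [mem_insert, mem_singleton, not_or] at hu
      exact hT.kApproval_eq_zero hp' hu.1 hu.2.1 hu.2.2.1 hu.2.2.2] at hsum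
  rw [sum_insert (by simp), sum_insert (by simp), sum_pair (by simp)] at hsum
  omega

variable {Q : List (Cand1 q ≃ Fin m)} {lam : ℕ}

theorem exists_isExactCover (hT : IsCompletion S p' T) (hp' : RanksTriplesOnTop S p')
    (hlam : score (kApproval m 2) (List.ofFn p' ++ Q) Cand1.c = lam)
    (hX : ∀ ix, score (kApproval m 2) (List.ofFn p' ++ Q) (Cand1.x ix) = lam + 1)
    (hY : ∀ iy, score (kApproval m 2) (List.ofFn p' ++ Q) (Cand1.y iy) = lam + 1)
    (hZ : ∀ iz, score (kApproval m 2) (List.ofFn p' ++ Q) (Cand1.z iz) + 1 = lam)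
    (hD : score (kApproval m 2) (List.ofFn p' ++ Q) Cand1.d1 + q = lam)
    (hwin : ∀ c', score (kApproval m 2) (List.ofFn T ++ Q) c' ≤
      score (kApproval m 2) (List.ofFn T ++ Q) Cand1.c) :
    ∃ K, IsExactCover S K := by
  have hc : score (kApproval m 2) (List.ofFn T ++ Q) Cand1.c = lam := by
    rw [← hlam, hp'.score_eq, score_ofFn_append]
    simp [hT.kApproval_eq_zero hp']
  have hwin' : ∀ u, ∑ i, kApproval m 2 (T i u) + score (kApproval m 2) Q u ≤ lam :=
    fun u => by simpa only [score_ofFn_append, hc] using hwin u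
  have hdrop : ∀ u, score (kApproval m 2) (List.ofFn p' ++ Q) u = lam + 1 →
      ∃ i, (u = Cand1.x (S i).1 ∨ u = Cand1.y (S i).2.1) ∧ kApproval m 2 (T i u) = 0 := by
    intro u hu
    rw [hp'.score_eq] at hu
    obtain ⟨i, -, hi⟩ := exists_lt_of_sum_lt (s := univ) (f := fun i => kApproval m 2 (T i u))
      (g := fun i => if u = Cand1.x (S i).1 ∨ u = Cand1.y (S i).2.1 then 1 else 0)
      (by have := hwin' u; omega)
    split_ifs at hi with h
    exacts [⟨i, h, by omega⟩, absurd hi (Nat.not_lt_zero _)]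
  refine exists_isExactCover_of_points S (fun i => kApproval_le_one m 2 _)
    (fun i => kApproval_le_one m 2 _) (fun i => kApproval_le_one m 2 _) (hT.kApproval_y_le_x hp')
    (hT.kApproval_add_four hp') (fun x => ?_) (fun y => ?_) (fun z => ?_) ?_
  · obtain ⟨i, hi, h0⟩ := hdrop _ (hX x)
    simp only [Cand1.x.injEq, reduceCtorEq, or_false] at hi
    exact ⟨i, hi.symm, hi ▸ h0⟩
  · obtain ⟨i, hi, h0⟩ := hdrop _ (hY y)
    simp only [Cand1.y.injEq, reduceCtorEq, false_or] at hi
    exact ⟨i, hi.symm, hi ▸ h0⟩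
  · have hz := hZ z
    rw [hp'.score_eq] at hz
    simp only [reduceCtorEq, or_self, if_false, sum_const_zero, zero_add] at hz
    calc ∑ i with (S i).2.2 = z, kApproval m 2 (T i (Cand1.z (S i).2.2))
        = ∑ i with (S i).2.2 = z, kApproval m 2 (T i (Cand1.z z)) :=
          sum_congr rfl fun i hi => by rw [(mem_filter.1 hi).2]
      _ ≤ ∑ i, kApproval m 2 (T i (Cand1.z z)) := sum_le_sum_of_subset (filter_subset _ _)
      _ ≤ 1 := by have := hwin' (Cand1.z z); omega
  · rw [hp'.score_eq] at hD
    simp only [reduceCtorEq, or_self, if_false, sum_const_zero, zero_add] at hD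
    have := hwin' Cand1.d1
    omega

end IsCompletion

def coverCompletion (S : Fin t → Fin q × Fin q × Fin q) (p' : Fin t → (Cand1 q ≃ Fin m))
    (K : Finset (Fin t)) (i : Fin t) : Cand1 q ≃ Fin m :=
  if i ∈ K then
    swapPairs (p' i) (Cand1.x (S i).1) (Cand1.y (S i).2.1) (Cand1.z (S i).2.2) Cand1.d1
  else p' i

namespace RanksTriplesOnTop

theorem isCompletion_coverCompletion (hp' : RanksTriplesOnTop S p') (K : Finset (Fin t)) :
    IsCompletion S p' (coverCompletion S p' K) := by
  intro i u v huz hud hvz hvd huv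
  by_cases hi : i ∈ K
  · simpa only [coverCompletion, hi, if_true] using
      (hp' i).swapPairs_lt_swapPairs huz hud hvz hvd huv
  · simpa only [coverCompletion, hi, if_false] using huv

theorem score_coverCompletion_add (hp' : RanksTriplesOnTop S p') (K : Finset (Fin t))
    (Q : List (Cand1 q ≃ Fin m)) (u : Cand1 q) :
    score (kApproval m 2) (List.ofFn (coverCompletion S p' K) ++ Q) u +
        ∑ i ∈ K, (if u = Cand1.x (S i).1 ∨ u = Cand1.y (S i).2.1 then 1 else 0) =
      score (kApproval m 2) (List.ofFn p' ++ Q) u +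
        ∑ i ∈ K, (if u = Cand1.z (S i).2.2 ∨ u = Cand1.d1 then 1 else 0) := by
  have hT : ∀ i, kApproval m 2 (coverCompletion S p' K i u) =
      if i ∈ K then (if u = Cand1.z (S i).2.2 ∨ u = Cand1.d1 then 1 else 0)
      else (if u = Cand1.x (S i).1 ∨ u = Cand1.y (S i).2.1 then 1 else 0) := fun i => by
    by_cases hi : i ∈ K
    · simpa only [coverCompletion, hi, if_true] using
        (isTopFour_swapPairs (hp' i)).kApproval_two_eq u
    · simpa only [coverCompletion, hi, if_false] using (hp' i).kApproval_two_eq u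
  rw [hp'.score_eq, score_ofFn_append, sum_congr rfl fun i _ => hT i, sum_ite,
    ← sum_filter_add_sum_filter_not univ (· ∈ K)]
  simp only [filter_mem_eq_inter, univ_inter]
  ring

end RanksTriplesOnTop

theorem IsExactCover.score_coverCompletion_le {K : Finset (Fin t)} (hK : IsExactCover S K)
    (hp' : RanksTriplesOnTop S p') {Q : List (Cand1 q ≃ Fin m)} {lam : ℕ}
    (hlam : score (kApproval m 2) (List.ofFn p' ++ Q) Cand1.c = lam)
    (hX : ∀ ix, score (kApproval m 2) (List.ofFn p' ++ Q) (Cand1.x ix) = lam + 1)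
    (hY : ∀ iy, score (kApproval m 2) (List.ofFn p' ++ Q) (Cand1.y iy) = lam + 1)
    (hZ : ∀ iz, score (kApproval m 2) (List.ofFn p' ++ Q) (Cand1.z iz) + 1 = lam)
    (hD : score (kApproval m 2) (List.ofFn p' ++ Q) Cand1.d1 + q = lam)
    (hW : score (kApproval m 2) (List.ofFn p' ++ Q) Cand1.w < lam) (u : Cand1 q) :
    score (kApproval m 2) (List.ofFn (coverCompletion S p' K) ++ Q) u ≤
      score (kApproval m 2) (List.ofFn (coverCompletion S p' K) ++ Q) Cand1.c := by
  have hscore := hp'.score_coverCompletion_add K Q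
  have hc := hscore Cand1.c
  simp only [reduceCtorEq, or_self, if_false, sum_const_zero, add_zero] at hc
  rw [hc, hlam]
  have hu := hscore u
  cases u with
  | x x' =>
    simp only [Cand1.x.injEq, reduceCtorEq, or_false, or_self, ↓reduceIte, sum_boole,
      card_filter_eq_one_of_injOn hK.1 hK.injOn_fst, Nat.cast_one, sum_const_zero,
      add_zero] at hu
    have := hX x'
    omega
  | y y' =>
    simp only [Cand1.y.injEq, reduceCtorEq, false_or, or_self, ↓reduceIte, sum_boole,
      card_filter_eq_one_of_injOn hK.1 hK.injOn_snd, Nat.cast_one, sum_const_zero,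
      add_zero] at hu
    have := hY y'
    omega
  | z z' =>
    simp only [Cand1.z.injEq, reduceCtorEq, or_false, or_self, ↓reduceIte, sum_boole,
      card_filter_eq_one_of_injOn hK.1 hK.injOn_thd, Nat.cast_one, sum_const_zero,
      add_zero] at hu
    have := hZ z'
    omega
  | c => omega
  | d1 =>
    simp only [reduceCtorEq, or_self, or_true, ↓reduceIte, sum_const_zero, sum_const, hK.1,
      smul_eq_mul, mul_one, add_zero] at hu
    omega
  | w =>
    simp only [reduceCtorEq, or_self, ↓reduceIte, sum_const_zero, add_zero] at hu
    omega

end Reduction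

theorem stmt4_general (q t : ℕ)
    (S : Fin t → Fin q × Fin q × Fin q)
    (p' : Fin t → (Cand1 q ≃ Fin (3 * q + 3)))
    (hx : ∀ i, (p' i (Cand1.x (S i).1)).val = 0)
    (hy : ∀ i, (p' i (Cand1.y (S i).2.1)).val = 1)
    (hz : ∀ i, (p' i (Cand1.z (S i).2.2)).val = 2)
    (hd : ∀ i, (p' i Cand1.d1).val = 3)
    (Q : List (Cand1 q ≃ Fin (3 * q + 3)))
    (lam : ℕ)
    (hlam : score (kApproval (3 * q + 3) 2) (List.ofFn p' ++ Q) Cand1.c = lam)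
    (hX : ∀ ix : Fin q,
      score (kApproval (3 * q + 3) 2) (List.ofFn p' ++ Q) (Cand1.x ix) = lam + 1)
    (hY : ∀ iy : Fin q,
      score (kApproval (3 * q + 3) 2) (List.ofFn p' ++ Q) (Cand1.y iy) = lam + 1)
    (hZ : ∀ iz : Fin q,
      score (kApproval (3 * q + 3) 2) (List.ofFn p' ++ Q) (Cand1.z iz) + 1 = lam)
    (hD : score (kApproval (3 * q + 3) 2) (List.ofFn p' ++ Q) Cand1.d1 + q = lam)
    (hW : score (kApproval (3 * q + 3) 2) (List.ofFn p' ++ Q) Cand1.w < lam) :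
    (∃ T : Fin t → (Cand1 q ≃ Fin (3 * q + 3)),
      (∀ (i : Fin t) (u v : Cand1 q),
        u ≠ Cand1.z (S i).2.2 → u ≠ Cand1.d1 →
        v ≠ Cand1.z (S i).2.2 → v ≠ Cand1.d1 →
        p' i u < p' i v → T i u < T i v) ∧
      ∀ c', score (kApproval (3 * q + 3) 2) (List.ofFn T ++ Q) c' ≤
            score (kApproval (3 * q + 3) 2) (List.ofFn T ++ Q) Cand1.c) ↔
    (∃ K : Finset (Fin t), K.card = q ∧
      ∀ i ∈ K, ∀ j ∈ K, i ≠ j →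
        (S i).1 ≠ (S j).1 ∧ (S i).2.1 ≠ (S j).2.1 ∧ (S i).2.2 ≠ (S j).2.2) := by
  have hp' : RanksTriplesOnTop S p' := fun i => ⟨hx i, hy i, hz i, hd i⟩
  constructor
  · rintro ⟨T, hT, hwin⟩
    exact IsCompletion.exists_isExactCover hT hp' hlam hX hY hZ hD hwin
  · rintro ⟨K, hK⟩
    exact ⟨coverCompletion S p' K, hp'.isCompletion_coverCompletion K,
      IsExactCover.score_coverCompletion_le hK hp' hlam hX hY hZ hD hW⟩

/-- in Reduction 1 for 2-approval (with `p'ᵢ = x_{i₁} ≻ y_{i₂} ≻ z_{i₃} ≻ d₁ ≻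
C⃗'ᵢ`, `c` preceding `w` in `C⃗'ᵢ`, `pᵢ` the partial chain obtained by deleting `z_{i₃}` and
`d₁`, and `Q` a total profile with `s(P'∪Q, x) = λ+1`, `s(P'∪Q, y) = λ+1`,
`s(P'∪Q, z) = λ−1`, `s(P'∪Q, d₁) = λ−q`, `s(P'∪Q, w) < λ` where `λ = s(P'∪Q, c)`),
the distinguished candidate `c` is a possible winner of `P ∪ Q` under 2-approval
iff the 3DM instance is positive. -/
theorem stmt4 (q t : ℕ) (hq : 1 ≤ q)
    (S : Fin t → Fin q × Fin q × Fin q)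
    (p' : Fin t → (Cand1 q ≃ Fin (3 * q + 3)))
    (hx : ∀ i, (p' i (Cand1.x (S i).1)).val = 0)
    (hy : ∀ i, (p' i (Cand1.y (S i).2.1)).val = 1)
    (hz : ∀ i, (p' i (Cand1.z (S i).2.2)).val = 2)
    (hd : ∀ i, (p' i Cand1.d1).val = 3)
    (hcw : ∀ i, p' i Cand1.c < p' i Cand1.w)
    (Q : List (Cand1 q ≃ Fin (3 * q + 3)))
    (lam : ℕ)
    (hlam : score (kApproval (3 * q + 3) 2) (List.ofFn p' ++ Q) Cand1.c = lam)
    (hX : ∀ ix : Fin q,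
      score (kApproval (3 * q + 3) 2) (List.ofFn p' ++ Q) (Cand1.x ix) = lam + 1)
    (hY : ∀ iy : Fin q,
      score (kApproval (3 * q + 3) 2) (List.ofFn p' ++ Q) (Cand1.y iy) = lam + 1)
    (hZ : ∀ iz : Fin q,
      score (kApproval (3 * q + 3) 2) (List.ofFn p' ++ Q) (Cand1.z iz) + 1 = lam)
    (hD : score (kApproval (3 * q + 3) 2) (List.ofFn p' ++ Q) Cand1.d1 + q = lam)
    (hW : score (kApproval (3 * q + 3) 2) (List.ofFn p' ++ Q) Cand1.w < lam) :
    (∃ T : Fin t → (Cand1 q ≃ Fin (3 * q + 3)),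
      (∀ (i : Fin t) (u v : Cand1 q),
        u ≠ Cand1.z (S i).2.2 → u ≠ Cand1.d1 →
        v ≠ Cand1.z (S i).2.2 → v ≠ Cand1.d1 →
        p' i u < p' i v → T i u < T i v) ∧
      ∀ c', score (kApproval (3 * q + 3) 2) (List.ofFn T ++ Q) c' ≤
            score (kApproval (3 * q + 3) 2) (List.ofFn T ++ Q) Cand1.c) ↔
    (∃ K : Finset (Fin t), K.card = q ∧
      ∀ i ∈ K, ∀ j ∈ K, i ≠ j →
        (S i).1 ≠ (S j).1 ∧ (S i).2.1 ≠ (S j).2.1 ∧ (S i).2.2 ≠ (S j).2.2) :=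
  stmt4_general q t S p' hx hy hz hd Q lam hlam hX hY hZ hD hW
end

section
/- Let r be a pure positional scoring rule that is p-valued with threshold n_0 (so for every m ≥ n_0 the scoring vector s^m of r has exactly p distinct values, where p ≥ 2). Then for every integer γ ≥ n_0 there exists a length m with n_0 ≤ m ≤ n_0 + γ·p such that some score value occurs exactly γ times in s^m. -/
/-!
Inserting one entry into a score vector raises the multiplicity of exactly one value by one, so
the multiplicity of a fixed value `v` climbs through every integer on its way up. With `p` values
present at length `n₀`, each value occurs at most `n₀ - p + 1 < γ` times; at length `n₀ + γ p`
pigeonhole gives a value occurring at least `γ` times. Its multiplicity therefore equals `γ` at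
some length in between.
-/

open Finset

theorem Nat.exists_eq_of_le_succ_of_le {f : ℕ → ℕ} (hf : ∀ n, f (n + 1) ≤ f n + 1) {a b c : ℕ}
    (hab : a ≤ b) (ha : f a ≤ c) (hb : c ≤ f b) : ∃ n, a ≤ n ∧ n ≤ b ∧ f n = c := by
  induction b, hab using Nat.le_induction with
  | base => exact ⟨a, le_rfl, le_rfl, le_antisymm ha hb⟩
  | succ b hab ih =>
    by_cases hc : c ≤ f b
    · obtain ⟨n, han, hnb, hn⟩ := ih hc
      exact ⟨n, han, hnb.trans b.le_succ, hn⟩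
    · exact ⟨b + 1, hab.trans b.le_succ, le_rfl, by have := hf b; omega⟩

theorem card_fiber_add_card_erase_image_le {ι α : Type*} [Fintype ι] [DecidableEq α]
    (s : ι → α) (v : α) : #{i | s i = v} + #((univ.image s).erase v) ≤ Fintype.card ι := by
  have herase : (univ.image s).erase v ⊆ (univ.filter fun i => s i ≠ v).image s := by
    intro w hw
    obtain ⟨hwv, hw⟩ := mem_erase.mp hw
    obtain ⟨i, -, rfl⟩ := mem_image.mp hw
    exact mem_image_of_mem s (mem_filter.mpr ⟨mem_univ i, hwv⟩)
  calc #{i | s i = v} + #((univ.image s).erase v)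
      ≤ #{i | s i = v} + #{i | s i ≠ v} :=
        Nat.add_le_add_left ((card_le_card herase).trans card_image_le) _
    _ = Fintype.card ι := card_filter_add_card_filter_not _

theorem Fin.card_filter_eq_succAbove {m : ℕ} {α : Type*} [DecidableEq α] (t : Fin (m + 1) → α)
    (j : Fin (m + 1)) (v : α) :
    #{i | t i = v} = #{k | t (j.succAbove k) = v} + if t j = v then 1 else 0 := by
  simp only [card_filter]
  rw [Fin.sum_univ_succAbove _ j, add_comm]

theorem Fin.apply_succAbove_eq_of_castSucc_of_succ {m : ℕ} {α : Type*} {s : Fin m → α}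
    {t : Fin (m + 1) → α} {j : Fin (m + 1)}
    (hlt : ∀ k : Fin m, (k : ℕ) < j → t k.castSucc = s k)
    (hge : ∀ k : Fin m, (j : ℕ) ≤ k → t k.succ = s k) (k : Fin m) :
    t (j.succAbove k) = s k := by
  rcases lt_or_ge (k : ℕ) j with h | h
  · rw [Fin.succAbove_of_castSucc_lt _ _ h]
    exact hlt k h
  · rw [Fin.succAbove_of_le_castSucc _ _ h]
    exact hge k h

theorem stmt6_general (p n0 : ℕ) (hp : 2 ≤ p)
    (sv : (m : ℕ) → Fin m → ℕ)
    (hpure : ∀ m, ∃ jins : Fin (m + 1),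
      (∀ k : Fin m, (k : ℕ) < (jins : ℕ) → sv (m + 1) k.castSucc = sv m k) ∧
      (∀ k : Fin m, (jins : ℕ) ≤ (k : ℕ) → sv (m + 1) k.succ = sv m k))
    (hval : ∀ m, n0 ≤ m → (Finset.univ.image (sv m)).card = p)
    (γ : ℕ) (hγ : n0 ≤ γ) :
    ∃ m, n0 ≤ m ∧ m ≤ n0 + γ * p ∧
      ∃ v : ℕ, (Finset.univ.filter fun k : Fin m => sv m k = v).card = γ := by
  have hstep (m v : ℕ) : #{k | sv (m + 1) k = v} ≤ #{k | sv m k = v} + 1 := by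
    obtain ⟨j, hlt, hge⟩ := hpure m
    rw [Fin.card_filter_eq_succAbove _ j]
    simp only [Fin.apply_succAbove_eq_of_castSucc_of_succ hlt hge]
    split_ifs <;> omega
  have hend := hval (n0 + γ * p) (Nat.le_add_right _ _)
  obtain ⟨v, -, hv⟩ := exists_le_card_fiber_of_mul_le_card_of_maps_to (n := γ)
    (fun k _ => mem_image_of_mem (sv (n0 + γ * p)) (mem_univ k))
    (card_pos.mp (by omega))
    (by rw [hend, card_univ, Fintype.card_fin, mul_comm]; exact Nat.le_add_left _ _)
  have hstart : #{k | sv n0 k = v} < γ := by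
    have hle := card_fiber_add_card_erase_image_le (sv n0) v
    have herase := pred_card_le_card_erase (s := univ.image (sv n0)) (a := v)
    rw [Fintype.card_fin] at hle
    rw [hval n0 le_rfl] at herase
    omega
  obtain ⟨m, hm0, hm1, hm⟩ := Nat.exists_eq_of_le_succ_of_le
    (f := fun m => #{k : Fin m | sv m k = v}) (hstep · v)
    (Nat.le_add_right n0 (γ * p)) hstart.le hv
  exact ⟨m, hm0, hm1, v, hm⟩

/-- let `sv` be a pure positional scoring rule (each `sv m` is nonincreasing, and
`sv (m+1)` is obtained from `sv m` by inserting one score value) that is `p`-valued with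
threshold `n₀` (`p ≥ 2`): for every `m ≥ n₀` the vector `sv m` has exactly `p` distinct
values.  Then for every integer `γ ≥ n₀` there exists a length `m` with
`n₀ ≤ m ≤ n₀ + γ·p` such that some score value occurs exactly `γ` times in `sv m`. -/
theorem stmt6 (p n0 : ℕ) (hp : 2 ≤ p) (hn0 : 1 ≤ n0)
    (sv : (m : ℕ) → Fin m → ℕ)
    (hanti : ∀ m, Antitone (sv m))
    (hpure : ∀ m, ∃ jins : Fin (m + 1),
      (∀ k : Fin m, (k : ℕ) < (jins : ℕ) → sv (m + 1) k.castSucc = sv m k) ∧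
      (∀ k : Fin m, (jins : ℕ) ≤ (k : ℕ) → sv (m + 1) k.succ = sv m k))
    (hval : ∀ m, n0 ≤ m → (Finset.univ.image (sv m)).card = p)
    (γ : ℕ) (hγ : n0 ≤ γ) :
    ∃ m, n0 ≤ m ∧ m ≤ n0 + γ * p ∧
      ∃ v : ℕ, (Finset.univ.filter fun k : Fin m => sv m k = v).card = γ :=
  stmt6_general p n0 hp sv hpure hval γ hγ
end

section
/- Let T be a total order on a finite set C, let g ∈ C, and let p be the partial chain on C whose linear order is the restriction of T to C ∖ {g}. Then: (i) the completions of p are exactly the total orders obtained from the restriction of T to C ∖ {g} by inserting g at some position; and (ii) for every scoring vector s of length |C| and every completion T* of p, every candidate e ranked above g in T satisfies s-score of e in T* ≤ s-score of e in T, and every candidate e ranked below g in T satisfies s-score of e in T* ≥ s-score of e in T. -/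
/-!
A ranking `T : C ≃ Fin n` places a candidate `e` exactly at the number of candidates it
ranks above `e`. A completion `T*` of the chain `T` restricted to `C ∖ {g}` keeps every
candidate that `T` ranks above (below) some `e ≠ g`, apart from `g`, above (below) `e`.
For `e` ranked above `g` in `T`, all candidates ranked above `e` differ from `g`, so `e` can
only move down in `T*`; symmetrically a candidate below `g` can only move up. Since `s` is
antitone, this is the claimed comparison of scores.
-/

open Finset

lemma forall_lt_imp_lt_iff_forall_lt_iff_lt {C α β : Type*} [LinearOrder α] [Preorder β]
    {f : C → α} (hf : Function.Injective f) (f' : C → β) (p : C → Prop) :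
    (∀ a b, p a → p b → f a < f b → f' a < f' b) ↔
      (∀ a b, p a → p b → (f a < f b ↔ f' a < f' b)) := by
  refine ⟨fun h a b ha hb => ⟨h a b ha hb, fun hlt' => ?_⟩,
    fun h a b ha hb => (h a b ha hb).mp⟩
  rcases lt_trichotomy (f a) (f b) with hlt | heq | hgt
  · exact hlt
  · exact absurd hlt' (hf heq ▸ lt_irrefl _)
  · exact absurd hlt' (h b a hb ha hgt).asymm

section Ranking

variable {C : Type*} [Fintype C] {n : ℕ}

lemma card_filter_lt_eq (T : C ≃ Fin n) (e : C) : #{b | T b < T e} = T e := by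
  rw [← Fin.card_Iio (T e)]
  exact card_equiv T fun b => by simp

lemma le_of_forall_lt_imp_lt (T T' : C ≃ Fin n) {e : C}
    (h : ∀ b, T b < T e → T' b < T' e) : T e ≤ T' e := by
  have hsub : ({b | T b < T e} : Finset C) ⊆ ({b | T' b < T' e} : Finset C) := fun b => by
    simpa using h b
  have hcard := card_le_card hsub
  rw [card_filter_lt_eq, card_filter_lt_eq] at hcard
  exact Fin.le_def.mpr hcard

lemma le_of_forall_gt_imp_gt (T T' : C ≃ Fin n) {e : C}
    (h : ∀ b, T e < T b → T' e < T' b) : T' e ≤ T e := by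
  have := le_of_forall_lt_imp_lt (T.trans Fin.revPerm) (T'.trans Fin.revPerm) (e := e)
    (by simpa [Fin.rev_lt_rev] using h)
  simpa [Fin.rev_le_rev] using this

end Ranking

/-- let `T` be a total order on a finite set `C` (modelled as an equivalence
with `Fin |C|`, sending a candidate to its `0`-indexed position), let `g ∈ C`, and let `p`
be the partial chain on `C` whose linear order is the restriction of `T` to `C ∖ {g}`
(so a completion of `p` is a total order `T*` preserving the relative order of all pairs
of candidates different from `g`).  Then:
(i) the completions of `p` are exactly the total orders obtained from the restriction of
`T` to `C ∖ {g}` by inserting `g` at some position, i.e. `T*` extends `p` iff the relative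
order of every pair of candidates different from `g` is the same in `T*` as in `T`; and
(ii) for every scoring vector `s` of length `|C|` and every completion `T*` of `p`, every
candidate ranked above `g` in `T` has `s`-score in `T*` at most its `s`-score in `T`, and
every candidate ranked below `g` in `T` has `s`-score in `T*` at least its `s`-score in
`T`. -/
theorem stmt8 {C : Type*} [Fintype C]
    (T : C ≃ Fin (Fintype.card C)) (g : C)
    (s : Fin (Fintype.card C) → ℕ) (hanti : Antitone s) :
    (∀ Tstar : C ≃ Fin (Fintype.card C),
      (∀ a b, a ≠ g → b ≠ g → T a < T b → Tstar a < Tstar b) ↔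
      (∀ a b, a ≠ g → b ≠ g → (T a < T b ↔ Tstar a < Tstar b))) ∧
    (∀ Tstar : C ≃ Fin (Fintype.card C),
      (∀ a b, a ≠ g → b ≠ g → T a < T b → Tstar a < Tstar b) →
      (∀ e, T e < T g → s (Tstar e) ≤ s (T e)) ∧
      (∀ e, T g < T e → s (T e) ≤ s (Tstar e))) := by
  refine ⟨fun Tstar => forall_lt_imp_lt_iff_forall_lt_iff_lt T.injective Tstar (· ≠ g),
    fun Tstar h => ⟨fun e he => hanti ?_, fun e he => hanti ?_⟩⟩
  · have hne : e ≠ g := by rintro rfl; exact lt_irrefl _ he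
    exact le_of_forall_lt_imp_lt T Tstar fun b hb =>
      h b e (by rintro rfl; exact (hb.trans he).false) hne hb
  · have hne : e ≠ g := by rintro rfl; exact lt_irrefl _ he
    exact le_of_forall_gt_imp_gt T Tstar fun b hb =>
      h e b hne (by rintro rfl; exact (he.trans hb).false) hb
end
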